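/- arXiv:1702.02320 — 7 statements merged into one kernel-verified Lean document; each statement's English description precedes it below -/
import Mathlib

section
/- For every even m ≥ 0, x_m · λ = p_{m+1} Λ_1 − p_m Λ_2, and for every odd m, x_m · λ = −p_m Λ_1 + p_{m+1} Λ_2. Here the Weyl group action on weights written in the basis (Λ_1, Λ_2) is given by r_1 · (u Λ_1 + v Λ_2) = −u Λ_1 + (b u + v) Λ_2 and r_2 · (u Λ_1 + v Λ_2) = (u + a v) Λ_1 − v Λ_2. -/
def pseq (a b : ℤ) : ℕ → ℤ
  | 0 => 1
  | 1 => 1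
  | m + 2 => (if m % 2 = 0 then b else a) * pseq a b (m + 1) - pseq a b m

def qseq (a b : ℤ) : ℕ → ℤ
  | 0 => 1
  | 1 => 1
  | m + 2 => (if m % 2 = 0 then a else b) * qseq a b (m + 1) - qseq a b m

/-- Simple reflection r₁ on the weight lattice, in the basis (Λ₁, Λ₂). -/
def r1 (b : ℤ) (w : ℤ × ℤ) : ℤ × ℤ := (-w.1, b * w.1 + w.2)

/-- Simple reflection r₂ on the weight lattice, in the basis (Λ₁, Λ₂). -/
def r2 (a : ℤ) (w : ℤ × ℤ) : ℤ × ℤ := (w.1 + a * w.2, -w.2)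

/-- `xl a b m = x_m · λ` where `x_{2k} = (r₂r₁)^k`, `x_{2k+1} = r₁(r₂r₁)^k`, `λ = Λ₁ - Λ₂`. -/
def xl (a b : ℤ) : ℕ → ℤ × ℤ
  | 0 => (1, -1)
  | m + 1 => if m % 2 = 0 then r1 b (xl a b m) else r2 a (xl a b m)

/-- `yl a b m = y_m · λ` where `y_{2k} = (r₁r₂)^k`, `y_{2k+1} = r₂(r₁r₂)^k`, `λ = Λ₁ - Λ₂`. -/
def yl (a b : ℤ) : ℕ → ℤ × ℤ
  | 0 => (1, -1)
  | m + 1 => if m % 2 = 0 then r2 a (yl a b m) else r1 b (yl a b m)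

/-- `xInv a b m` is the inverse `x_m⁻¹` as a map on the weight lattice. -/
def xInv (a b : ℤ) : ℕ → ℤ × ℤ → ℤ × ℤ
  | 0 => id
  | m + 1 => (xInv a b m) ∘ (if m % 2 = 0 then r1 b else r2 a)

/-- `yInv a b m` is the inverse `y_m⁻¹` as a map on the weight lattice. -/
def yInv (a b : ℤ) : ℕ → ℤ × ℤ → ℤ × ℤ
  | 0 => id
  | m + 1 => (yInv a b m) ∘ (if m % 2 = 0 then r2 a else r1 b)

theorem stmt4 (a b : ℤ) (ha : 2 ≤ a) (hb : 2 ≤ b) (hab : 4 < a * b) :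
    ∀ m : ℕ,
      (Even m → xl a b m = (pseq a b (m + 1), -pseq a b m)) ∧
      (Odd m → xl a b m = (-pseq a b m, pseq a b (m + 1))) := by
  intro m
  induction m with
  | zero =>
    constructor
    · intro _
      simp [xl, pseq]
    · intro h; exact absurd h (by decide)
  | succ m ih =>
    rcases Nat.even_or_odd m with he | ho
    · have hm : m % 2 = 0 := Nat.even_iff.mp he
      have hx := ih.1 he
      constructor
      · intro h
        exact absurd (Nat.even_add_one.mp h) (by simpa using he)
      · intro _
        show (if m % 2 = 0 then r1 b (xl a b m) else r2 a (xl a b m)) = _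
        rw [hm, if_pos rfl, hx]
        show _ = (-pseq a b (m+1), pseq a b (m+2))
        simp [r1, pseq, hm]
        ring
    · have hm : m % 2 = 1 := Nat.odd_iff.mp ho
      have hx := ih.2 ho
      constructor
      · intro _
        show (if m % 2 = 0 then r1 b (xl a b m) else r2 a (xl a b m)) = _
        rw [hm, if_neg (by decide), hx]
        show _ = (pseq a b (m+2), -pseq a b (m+1))
        simp [r2, pseq, hm]
        ring
      · intro h
        exact absurd (Nat.Odd.sub_odd h odd_one) (by simpa using ho)
end

section
/- For every even m ≥ 0, y_m · λ = q_m Λ_1 − q_{m+1} Λ_2, and for every odd m, y_m · λ = −q_{m+1} Λ_1 + q_m Λ_2. -/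
theorem stmt5 (a b : ℤ) (ha : 2 ≤ a) (hb : 2 ≤ b) (hab : 4 < a * b) :
    ∀ m : ℕ,
      (Even m → yl a b m = (qseq a b m, -qseq a b (m + 1))) ∧
      (Odd m → yl a b m = (-qseq a b (m + 1), qseq a b m)) := by
  intro m
  induction m with
  | zero =>
    refine ⟨fun _ => ?_, fun h => absurd h (by decide)⟩
    simp [yl, qseq]
  | succ n ih =>
    rcases Nat.even_or_odd n with he | ho
    · have h0 : n % 2 = 0 := Nat.even_iff.mp he
      have h1 := ih.1 he
      refine ⟨fun h => absurd (Nat.even_add_one.mp h) (by simpa using he), fun _ => ?_⟩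
      simp only [yl, h0, if_pos rfl, h1, r2]
      have hq : qseq a b (n + 2) = a * qseq a b (n + 1) - qseq a b n := by
        rw [qseq]; simp [h0]
      rw [hq]; simp; ring
    · have h0 : n % 2 = 1 := Nat.odd_iff.mp ho
      have h1 := ih.2 ho
      refine ⟨fun _ => ?_, fun h => absurd (Nat.odd_iff.mp h) (by omega)⟩
      simp only [yl, h0]
      rw [if_neg (by omega), h1]
      have hq : qseq a b (n + 2) = b * qseq a b (n + 1) - qseq a b n := by
        rw [qseq]; simp [h0]
      simp [r1, hq]; ring
end

section
/- No element of the Weyl group orbit of λ = Λ_1 − Λ_2 is dominant or antidominant: for every w ∈ W, the weight w·λ = u Λ_1 + v Λ_2 satisfies neither (u ≥ 0 and v ≥ 0) nor (u ≤ 0 and v ≤ 0). -/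
lemma r1_invol (b : ℤ) (p : ℤ × ℤ) : r1 b (r1 b p) = p := by
  simp [r1]

lemma r2_invol (a : ℤ) (p : ℤ × ℤ) : r2 a (r2 a p) = p := by
  simp only [r2]
  ext <;> simp <;> ring

lemma inv_xl (a b : ℤ) (ha : 2 ≤ a) (hb : 2 ≤ b) : ∀ m,
    (m % 2 = 0 → 1 ≤ -(xl a b m).2 ∧ -(xl a b m).2 ≤ (xl a b m).1) ∧
    (m % 2 = 1 → 1 ≤ -(xl a b m).1 ∧ -(xl a b m).1 ≤ (xl a b m).2) := by
  intro m
  induction m with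
  | zero => simp [xl]
  | succ m ih =>
    rcases Nat.even_or_odd m with he | ho
    · have hm : m % 2 = 0 := Nat.even_iff.mp he
      obtain ⟨h1, h2⟩ := ih.1 hm
      refine ⟨fun h => by omega, fun _ => ?_⟩
      have hx : xl a b (m+1) = r1 b (xl a b m) := by simp [xl, hm]
      rw [hx]; simp only [r1]
      constructor <;> nlinarith
    · have hm : m % 2 = 1 := Nat.odd_iff.mp ho
      obtain ⟨h1, h2⟩ := ih.2 hm
      refine ⟨fun _ => ?_, fun h => by omega⟩
      have hne : ¬ (m % 2 = 0) := by omega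
      have hx : xl a b (m+1) = r2 a (xl a b m) := by simp [xl, hne]
      rw [hx]; simp only [r2]
      constructor <;> nlinarith

lemma inv_yl (a b : ℤ) (ha : 2 ≤ a) (hb : 2 ≤ b) : ∀ m,
    (m % 2 = 0 → 1 ≤ (yl a b m).1 ∧ (yl a b m).1 ≤ -(yl a b m).2) ∧
    (m % 2 = 1 → 1 ≤ (yl a b m).2 ∧ (yl a b m).2 ≤ -(yl a b m).1) := by
  intro m
  induction m with
  | zero => simp [yl]
  | succ m ih =>
    rcases Nat.even_or_odd m with he | ho
    · have hm : m % 2 = 0 := Nat.even_iff.mp he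
      obtain ⟨h1, h2⟩ := ih.1 hm
      refine ⟨fun h => by omega, fun _ => ?_⟩
      have hx : yl a b (m+1) = r2 a (yl a b m) := by simp [yl, hm]
      rw [hx]; simp only [r2]
      constructor <;> nlinarith
    · have hm : m % 2 = 1 := Nat.odd_iff.mp ho
      obtain ⟨h1, h2⟩ := ih.2 hm
      refine ⟨fun _ => ?_, fun h => by omega⟩
      have hne : ¬ (m % 2 = 0) := by omega
      have hx : yl a b (m+1) = r1 b (yl a b m) := by simp [yl, hne]
      rw [hx]; simp only [r1]
      constructor <;> nlinarith

/-- The orbit set. -/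
def Orb (a b : ℤ) : Set (ℤ × ℤ) := {p | ∃ m, p = xl a b m ∨ p = yl a b m}

lemma r1_orb (a b : ℤ) {p : ℤ × ℤ} (hp : p ∈ Orb a b) : r1 b p ∈ Orb a b := by
  obtain ⟨m, hm | hm⟩ := hp <;> subst hm
  · rcases Nat.even_or_odd m with he | ho
    · have h : m % 2 = 0 := Nat.even_iff.mp he
      exact ⟨m + 1, Or.inl (by simp [xl, h])⟩
    · obtain ⟨k, rfl⟩ := ho
      have h : (2 * k) % 2 = 0 := by omega
      refine ⟨2 * k, Or.inl ?_⟩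
      have : xl a b (2 * k + 1) = r1 b (xl a b (2 * k)) := by simp [xl, h]
      rw [this, r1_invol]
  · rcases Nat.even_or_odd m with he | ho
    · have h : m % 2 = 0 := Nat.even_iff.mp he
      rcases m with _ | m
      · exact ⟨1, Or.inl (by simp [xl, yl])⟩
      · have hm : m % 2 = 1 := by omega
        have hne : ¬ (m % 2 = 0) := by omega
        refine ⟨m, Or.inr ?_⟩
        have : yl a b (m + 1) = r1 b (yl a b m) := by simp [yl, hne]
        rw [this, r1_invol]
    · have h1 : m % 2 = 1 := Nat.odd_iff.mp ho
      have h : ¬ (m % 2 = 0) := by omega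
      exact ⟨m + 1, Or.inr (by simp [yl, h])⟩

lemma r2_orb (a b : ℤ) {p : ℤ × ℤ} (hp : p ∈ Orb a b) : r2 a p ∈ Orb a b := by
  obtain ⟨m, hm | hm⟩ := hp <;> subst hm
  · rcases Nat.even_or_odd m with he | ho
    · have h : m % 2 = 0 := Nat.even_iff.mp he
      rcases m with _ | m
      · exact ⟨1, Or.inr (by simp [xl, yl])⟩
      · have hm : m % 2 = 1 := by omega
        have hne : ¬ (m % 2 = 0) := by omega
        refine ⟨m, Or.inl ?_⟩
        have : xl a b (m + 1) = r2 a (xl a b m) := by simp [xl, hne]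
        rw [this, r2_invol]
    · have h1 : m % 2 = 1 := Nat.odd_iff.mp ho
      have h : ¬ (m % 2 = 0) := by omega
      exact ⟨m + 1, Or.inl (by simp [xl, h])⟩
  · rcases Nat.even_or_odd m with he | ho
    · have h : m % 2 = 0 := Nat.even_iff.mp he
      exact ⟨m + 1, Or.inr (by simp [yl, h])⟩
    · obtain ⟨k, rfl⟩ := ho
      have h : (2 * k) % 2 = 0 := by omega
      refine ⟨2 * k, Or.inr ?_⟩
      have : yl a b (2 * k + 1) = r2 a (yl a b (2 * k)) := by simp [yl, h]
      rw [this, r2_invol]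

lemma orb_mixed (a b : ℤ) (ha : 2 ≤ a) (hb : 2 ≤ b) {p : ℤ × ℤ} (hp : p ∈ Orb a b) :
    (1 ≤ p.1 ∧ p.2 ≤ -1) ∨ (p.1 ≤ -1 ∧ 1 ≤ p.2) := by
  obtain ⟨m, hm | hm⟩ := hp <;> subst hm
  · rcases Nat.even_or_odd m with he | ho
    · have h := (inv_xl a b ha hb m).1 (Nat.even_iff.mp he); left; omega
    · have h := (inv_xl a b ha hb m).2 (Nat.odd_iff.mp ho); right; omega
  · rcases Nat.even_or_odd m with he | ho
    · have h := (inv_yl a b ha hb m).1 (Nat.even_iff.mp he); left; omega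
    · have h := (inv_yl a b ha hb m).2 (Nat.odd_iff.mp ho); right; omega

theorem stmt6 (a b : ℤ) (ha : 2 ≤ a) (hb : 2 ≤ b) (hab : 4 < a * b) :
    ∀ f ∈ Submonoid.closure ({r1 b, r2 a} : Set (Function.End (ℤ × ℤ))),
      ¬(0 ≤ (f (1, -1)).1 ∧ 0 ≤ (f (1, -1)).2) ∧
      ¬((f (1, -1)).1 ≤ 0 ∧ (f (1, -1)).2 ≤ 0) := by
  intro f hf
  have key : ∀ p ∈ Orb a b, f p ∈ Orb a b := by
    induction hf using Submonoid.closure_induction with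
    | mem g hg =>
      rcases hg with rfl | rfl
      · exact fun p hp => r1_orb a b hp
      · exact fun p hp => r2_orb a b hp
    | one => exact fun p hp => hp
    | mul g h _ _ hg hh => exact fun p hp => hg _ (hh p hp)
  have h0 : ((1, -1) : ℤ × ℤ) ∈ Orb a b := ⟨0, Or.inl rfl⟩
  have := orb_mixed a b ha hb (key _ h0)
  constructor <;> rintro ⟨h1, h2⟩ <;> omega
end

section
/- For each even m ≥ 0 and each even l ≥ 0: ⟨x_m λ, (x_l α_2)^∨⟩ < 0 and ⟨x_m λ, (y_{l+1} α_1)^∨⟩ < 0. Concretely, ⟨x_m λ, x_l(α_2)^∨⟩ = −p_{m−l} if m ≥ l and = −q_{l−m+1} if m ≤ l. -/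
section Aux

variable (a b : ℤ)

lemma aux_pseq_mono (ha : 2 ≤ a) (hb : 2 ≤ b) :
    ∀ m, 1 ≤ pseq a b m ∧ pseq a b m ≤ pseq a b (m+1) := by
  intro m
  induction m with
  | zero => simp [pseq]
  | succ n ih =>
    have hc : 2 ≤ (if n % 2 = 0 then b else a) := by split <;> assumption
    have h2 : pseq a b (n+2) = (if n % 2 = 0 then b else a) * pseq a b (n+1) - pseq a b n := by
      rw [pseq]
    constructor
    · linarith [ih.1, ih.2]
    · rw [h2]; nlinarith [ih.1, ih.2]

lemma aux_qseq_mono (ha : 2 ≤ a) (hb : 2 ≤ b) :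
    ∀ m, 1 ≤ qseq a b m ∧ qseq a b m ≤ qseq a b (m+1) := by
  intro m
  induction m with
  | zero => simp [qseq]
  | succ n ih =>
    have hc : 2 ≤ (if n % 2 = 0 then a else b) := by split <;> assumption
    have h2 : qseq a b (n+2) = (if n % 2 = 0 then a else b) * qseq a b (n+1) - qseq a b n := by
      rw [qseq]
    constructor
    · linarith [ih.1, ih.2]
    · rw [h2]; nlinarith [ih.1, ih.2]

lemma aux_r1_invol (v : ℤ × ℤ) : r1 b (r1 b v) = v := by simp [r1]
lemma aux_r2_invol (v : ℤ × ℤ) : r2 a (r2 a v) = v := by simp [r2]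

lemma aux_pseq_even (k : ℕ) : pseq a b (2*k+2) = b * pseq a b (2*k+1) - pseq a b (2*k) := by
  rw [pseq]; simp [Nat.mul_mod_right]

lemma aux_pseq_odd (k : ℕ) : pseq a b (2*k+3) = a * pseq a b (2*k+2) - pseq a b (2*k+1) := by
  rw [show 2*k+3 = (2*k+1)+2 from rfl, pseq]
  simp [Nat.add_mod, Nat.mul_mod_right]

lemma aux_qseq_even (k : ℕ) : qseq a b (2*k+2) = a * qseq a b (2*k+1) - qseq a b (2*k) := by
  rw [qseq]; simp [Nat.mul_mod_right]

lemma aux_qseq_odd (k : ℕ) : qseq a b (2*k+3) = b * qseq a b (2*k+2) - qseq a b (2*k+1) := by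
  rw [show 2*k+3 = (2*k+1)+2 from rfl, qseq]
  simp [Nat.add_mod, Nat.mul_mod_right]

lemma aux_xl_step (k : ℕ) : xl a b (2*k+2) = r2 a (r1 b (xl a b (2*k))) := by
  have h1 : (2*k) % 2 = 0 := by omega
  have h2 : (2*k+1) % 2 = 1 := by omega
  show xl a b (2*k+1+1) = _
  rw [xl, h2]
  simp only [if_neg (by omega : ¬ (1:ℕ) = 0)]
  rw [xl, h1]
  simp

lemma aux_xInv_step (j : ℕ) (v : ℤ × ℤ) :
    xInv a b (2*j+2) v = xInv a b (2*j) (r1 b (r2 a v)) := by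
  have h1 : (2*j) % 2 = 0 := by omega
  have h2 : (2*j+1) % 2 = 1 := by omega
  show xInv a b (2*j+1+1) v = _
  rw [xInv, h2]
  simp only [if_neg (by omega : ¬ (1:ℕ) = 0), Function.comp_apply]
  rw [xInv, h1]
  simp

lemma aux_yInv_one (v : ℤ × ℤ) : yInv a b (2*0+1) v = r2 a v := by
  show yInv a b (0+1) v = _
  rw [yInv]
  simp [yInv]

lemma aux_yInv_odd_def (j : ℕ) (v : ℤ × ℤ) :
    yInv a b (2*j+1) v = yInv a b (2*j) (r2 a v) := by
  have h1 : (2*j) % 2 = 0 := by omega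
  rw [yInv, h1]
  simp

lemma aux_yInv_step (j : ℕ) (v : ℤ × ℤ) :
    yInv a b (2*j+3) v = yInv a b (2*j+1) (r1 b (r2 a v)) := by
  have h1 : (2*j+1) % 2 = 1 := by omega
  have h2 : (2*j+2) % 2 = 0 := by omega
  show yInv a b (2*j+2+1) v = _
  rw [yInv, h2]
  simp only [if_pos rfl, Function.comp_apply]
  show yInv a b (2*j+1+1) _ = _
  rw [yInv, h1]
  simp

lemma aux_xl_even (k : ℕ) : xl a b (2*k) = (pseq a b (2*k+1), -pseq a b (2*k)) := by
  induction k with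
  | zero => simp [xl, pseq]
  | succ n ih =>
    rw [show 2*(n+1) = 2*n+2 from by ring, aux_xl_step, ih]
    simp only [r1, r2]
    rw [Prod.mk.injEq]
    constructor
    · rw [show 2*n+2+1 = 2*n+3 from rfl, aux_pseq_odd, aux_pseq_even]; ring
    · rw [aux_pseq_even]; ring

lemma aux_xInv_comm : ∀ (k : ℕ) (v : ℤ × ℤ),
    xInv a b (2*(k+1)) v = r1 b (r2 a (xInv a b (2*k) v)) := by
  intro k
  induction k with
  | zero =>
    intro v
    rw [show 2*(0+1) = 2*0+2 from rfl, aux_xInv_step]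
    simp [xInv]
  | succ n ih =>
    intro v
    rw [show 2*(n+1+1) = 2*(n+1)+2 from by ring, aux_xInv_step, ih,
      show 2*(n+1) = 2*n+2 from by ring, aux_xInv_step]

lemma aux_yInv_comm : ∀ (k : ℕ) (v : ℤ × ℤ),
    yInv a b (2*(k+1)) v = r2 a (r1 b (yInv a b (2*k) v)) := by
  intro k
  induction k with
  | zero =>
    intro v
    have : yInv a b (2*(0+1)) v = yInv a b (2*0+1) (r1 b v) := by
      show yInv a b (2*0+1+1) v = _
      rw [yInv]
      simp only [if_neg (by omega : ¬ (2*0+1) % 2 = 0), Function.comp_apply]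
    rw [this, aux_yInv_one]
    simp [yInv]
  | succ n ih =>
    intro v
    have step : ∀ m (w : ℤ × ℤ), yInv a b (2*(m+1)) w = yInv a b (2*m) (r2 a (r1 b w)) := by
      intro m w
      show yInv a b (2*m+1+1) w = _
      rw [yInv]
      simp only [if_neg (by omega : ¬ (2*m+1) % 2 = 0), Function.comp_apply]
      rw [aux_yInv_odd_def]
    rw [step (n+1), ih, ← step n]

lemma aux_xInv_val (k : ℕ) :
    xInv a b (2*k) (1, -1) = (qseq a b (2*k), -qseq a b (2*k+1)) := by
  induction k with
  | zero => simp [xInv, qseq]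
  | succ n ih =>
    rw [aux_xInv_comm, ih]
    simp only [r1, r2]
    rw [Prod.mk.injEq]
    constructor
    · rw [show 2*(n+1) = 2*n+2 from by ring, aux_qseq_even]; ring
    · rw [show 2*(n+1)+1 = 2*n+3 from by ring, aux_qseq_odd, aux_qseq_even]; ring

lemma aux_yInv_val (k : ℕ) :
    yInv a b (2*k) (1-a, 1) = (-qseq a b (2*k+2), qseq a b (2*k+1)) := by
  induction k with
  | zero =>
    simp only [Nat.mul_zero, Nat.zero_add, yInv, id, qseq]
    rw [Prod.mk.injEq]
    constructor <;> simp <;> ring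
  | succ n ih =>
    rw [aux_yInv_comm, ih]
    simp only [r1, r2]
    rw [Prod.mk.injEq]
    constructor
    · have e4 := aux_qseq_even a b (n+1)
      rw [show 2*(n+1)+1 = 2*n+3 from by ring, show 2*(n+1) = 2*n+2 from by ring] at e4
      rw [show 2*(n+1)+2 = 2*n+2+2 from by ring]
      rw [e4, aux_qseq_odd]
      ring
    · rw [show 2*(n+1)+1 = 2*n+3 from by ring, aux_qseq_odd]; ring

lemma aux_A1 (i : ℕ) : ∀ j, xInv a b (2*j) (xl a b (2*(i+j))) = xl a b (2*i) := by
  intro j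
  induction j with
  | zero => simp [xInv]
  | succ n ih =>
    rw [show 2*(n+1) = 2*n+2 from by ring, show 2*(i+(n+1)) = 2*(i+n)+2 from by ring,
      aux_xl_step, aux_xInv_step, aux_r2_invol, aux_r1_invol, ih]

lemma aux_A2 (j : ℕ) : ∀ i, xInv a b (2*(j+i)) (xl a b (2*i)) = xInv a b (2*j) (1, -1) := by
  intro i
  induction i with
  | zero => simp [xl]
  | succ n ih =>
    rw [show 2*(j+(n+1)) = 2*(j+n)+2 from by ring, show 2*(n+1) = 2*n+2 from by ring,
      aux_xl_step, aux_xInv_step, aux_r2_invol, aux_r1_invol, ih]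

lemma aux_B1 (i : ℕ) : ∀ j, yInv a b (2*j+1) (xl a b (2*(i+j))) = r2 a (xl a b (2*i)) := by
  intro j
  induction j with
  | zero => rw [aux_yInv_one]; simp
  | succ n ih =>
    rw [show 2*(n+1)+1 = 2*n+3 from by ring, show 2*(i+(n+1)) = 2*(i+n)+2 from by ring,
      aux_xl_step, aux_yInv_step, aux_r2_invol, aux_r1_invol, ih]

lemma aux_B2 (j : ℕ) : ∀ i, yInv a b (2*(j+i)+1) (xl a b (2*i)) = yInv a b (2*j) (1-a, 1) := by
  intro i
  induction i with
  | zero =>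
    rw [show (2*(j+0)+1) = 2*j+1 from by ring, aux_yInv_odd_def]
    have : r2 a ((1:ℤ), (-1:ℤ)) = (1-a, 1) := by simp [r2]; ring
    simp only [xl]
    rw [this]
  | succ n ih =>
    rw [show 2*(j+(n+1))+1 = 2*(j+n)+3 from by ring, show 2*(n+1) = 2*n+2 from by ring,
      aux_xl_step, aux_yInv_step, aux_r2_invol, aux_r1_invol, ih]

lemma aux_pseq_lt (ha : 2 ≤ a) (hb : 2 ≤ b) (d : ℕ) :
    pseq a b (2*d+1) < a * pseq a b (2*d) := by
  cases d with
  | zero => simpa [pseq] using by linarith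
  | succ e =>
    have h : pseq a b (2*(e+1)+1) = a * pseq a b (2*(e+1)) - pseq a b (2*e+1) := by
      rw [show 2*(e+1)+1 = 2*e+3 from by ring, aux_pseq_odd,
        show 2*(e+1) = 2*e+2 from by ring]
    rw [h]
    linarith [(aux_pseq_mono a b ha hb (2*e+1)).1]

end Aux

theorem stmt8 (a b : ℤ) (ha : 2 ≤ a) (hb : 2 ≤ b) (hab : 4 < a * b) :
    ∀ m l : ℕ, Even m → Even l →
      (xInv a b l (xl a b m)).2 < 0 ∧
      (yInv a b (l + 1) (xl a b m)).1 < 0 ∧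
      (l ≤ m → (xInv a b l (xl a b m)).2 = -pseq a b (m - l)) ∧
      (m ≤ l → (xInv a b l (xl a b m)).2 = -qseq a b (l - m + 1)) := by
  intro m l hm hl
  obtain ⟨i, hi⟩ := hm
  obtain ⟨j, hj⟩ := hl
  have hm2 : m = 2*i := by omega
  have hl2 : l = 2*j := by omega
  subst hm2 hl2
  rcases le_total j i with hji | hij
  · -- l ≤ m case: d = i - j
    obtain ⟨d, hd⟩ : ∃ d, i = d + j := ⟨i - j, by omega⟩
    subst hd
    have hA : xInv a b (2*j) (xl a b (2*(d+j))) = xl a b (2*d) := aux_A1 a b d j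
    have hB : yInv a b (2*j+1) (xl a b (2*(d+j))) = r2 a (xl a b (2*d)) := aux_B1 a b d j
    have hxl : xl a b (2*d) = (pseq a b (2*d+1), -pseq a b (2*d)) := aux_xl_even a b d
    have hp1 := (aux_pseq_mono a b ha hb (2*d)).1
    refine ⟨?_, ?_, ?_, ?_⟩
    · rw [hA, hxl]; simpa using by linarith
    · rw [hB, hxl]
      simp only [r2]
      have := aux_pseq_lt a b ha hb d
      simpa using by linarith
    · intro _
      rw [hA, hxl]
      have : 2*(d+j) - 2*j = 2*d := by omega
      rw [this]
    · intro hle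
      have hd0 : d = 0 := by omega
      subst hd0
      rw [hA, hxl]
      have : 2*j - 2*(0+j) + 1 = 1 := by omega
      rw [this]
      simp [pseq, qseq]
  · -- m ≤ l case: d = j - i
    obtain ⟨d, hd⟩ : ∃ d, j = d + i := ⟨j - i, by omega⟩
    subst hd
    have hA : xInv a b (2*(d+i)) (xl a b (2*i)) = xInv a b (2*d) (1, -1) := aux_A2 a b d i
    have hB : yInv a b (2*(d+i)+1) (xl a b (2*i)) = yInv a b (2*d) (1-a, 1) := aux_B2 a b d i
    have hx : xInv a b (2*d) (1, -1) = (qseq a b (2*d), -qseq a b (2*d+1)) := aux_xInv_val a b d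
    have hy : yInv a b (2*d) (1-a, 1) = (-qseq a b (2*d+2), qseq a b (2*d+1)) := aux_yInv_val a b d
    have hq1 := (aux_qseq_mono a b ha hb (2*d+1)).1
    have hq2 := (aux_qseq_mono a b ha hb (2*d+2)).1
    refine ⟨?_, ?_, ?_, ?_⟩
    · rw [hA, hx]; simpa using by linarith
    · have : (2*(d+i)) + 1 = 2*(d+i)+1 := rfl
      rw [this, hB, hy]
      simpa using by linarith
    · intro hle
      have hd0 : d = 0 := by omega
      subst hd0
      rw [hA, hx]
      have : 2*i - 2*(0+i) = 0 := by omega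
      rw [this]
      simp [pseq, qseq]
    · intro _
      rw [hA, hx]
      have : 2*(d+i) - 2*i + 1 = 2*d+1 := by omega
      rw [this]
end

section
/- The Weyl group orbit of λ is exactly {x_m λ : m ≥ 0} ∪ {y_m λ : m ≥ 0}, and these weights are pairwise distinct except x_0 λ = y_0 λ = λ. -/
/-! ### Auxiliary lemmas -/

lemma r1_r1 (b : ℤ) (w : ℤ × ℤ) : r1 b (r1 b w) = w := by
  simp [r1, Prod.ext_iff]

lemma r2_r2 (a : ℤ) (w : ℤ × ℤ) : r2 a (r2 a w) = w := by
  simp [r2, Prod.ext_iff]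

lemma pseq_step (a b : ℤ) (m : ℕ) :
    pseq a b (m + 2) = (if m % 2 = 0 then b else a) * pseq a b (m + 1) - pseq a b m := by
  rw [pseq]

lemma qseq_step (a b : ℤ) (m : ℕ) :
    qseq a b (m + 2) = (if m % 2 = 0 then a else b) * qseq a b (m + 1) - qseq a b m := by
  rw [qseq]

lemma pseq_zero (a b : ℤ) : pseq a b 0 = 1 := rfl
lemma pseq_one (a b : ℤ) : pseq a b 1 = 1 := rfl
lemma qseq_zero (a b : ℤ) : qseq a b 0 = 1 := rfl
lemma qseq_one (a b : ℤ) : qseq a b 1 = 1 := rfl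

lemma pseq_two (a b : ℤ) : pseq a b 2 = b - 1 := by
  have h := pseq_step a b 0
  norm_num [pseq_zero, pseq_one] at h
  linarith

lemma qseq_two (a b : ℤ) : qseq a b 2 = a - 1 := by
  have h := qseq_step a b 0
  norm_num [qseq_zero, qseq_one] at h
  linarith

lemma pseq_three (a b : ℤ) : pseq a b 3 = a * (b - 1) - 1 := by
  have h := pseq_step a b 1
  norm_num [pseq_one, pseq_two] at h
  linarith

lemma qseq_three (a b : ℤ) : qseq a b 3 = b * (a - 1) - 1 := by
  have h := qseq_step a b 1
  norm_num [qseq_one, qseq_two] at h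
  linarith

section Seq

variable {a b : ℤ} (ha : 2 ≤ a) (hb : 2 ≤ b) (hab : 4 < a * b)

include ha hb in
lemma pseq_mono : ∀ m : ℕ, 1 ≤ pseq a b m ∧ pseq a b m ≤ pseq a b (m + 1) := by
  intro m
  induction m with
  | zero => exact ⟨le_refl _, le_refl _⟩
  | succ m ih =>
    obtain ⟨h1, h2⟩ := ih
    have h1' : 1 ≤ pseq a b (m + 1) := le_trans h1 h2
    refine ⟨h1', ?_⟩
    rw [pseq_step]
    have hc : 2 ≤ (if m % 2 = 0 then b else a) := by split <;> assumption
    nlinarith [h1, h2, h1', hc]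

include ha hb in
lemma qseq_mono : ∀ m : ℕ, 1 ≤ qseq a b m ∧ qseq a b m ≤ qseq a b (m + 1) := by
  intro m
  induction m with
  | zero => exact ⟨le_refl _, le_refl _⟩
  | succ m ih =>
    obtain ⟨h1, h2⟩ := ih
    have h1' : 1 ≤ qseq a b (m + 1) := le_trans h1 h2
    refine ⟨h1', ?_⟩
    rw [qseq_step]
    have hc : 2 ≤ (if m % 2 = 0 then a else b) := by split <;> assumption
    nlinarith [h1, h2, h1', hc]

include ha hb hab in
lemma pseq_strict : ∀ m : ℕ, pseq a b (m + 2) < pseq a b (m + 3) := by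
  intro m
  induction m with
  | zero =>
    rw [pseq_two, pseq_three]
    nlinarith
  | succ m ih =>
    have h1 := (pseq_mono ha hb (m + 2)).1
    have h1' := (pseq_mono ha hb (m + 3)).1
    have hc : 2 ≤ (if (m + 2) % 2 = 0 then b else a) := by split <;> assumption
    have hstep := pseq_step a b (m + 2)
    rw [show m + 2 + 2 = m + 1 + 3 from by omega,
      show m + 2 + 1 = m + 3 from by omega] at hstep
    have e : m + 1 + 2 = m + 3 := by omega
    rw [e, hstep]
    nlinarith [ih, h1, h1', hc]

include ha hb hab in
lemma qseq_strict : ∀ m : ℕ, qseq a b (m + 2) < qseq a b (m + 3) := by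
  intro m
  induction m with
  | zero =>
    rw [qseq_two, qseq_three]
    nlinarith
  | succ m ih =>
    have h1 := (qseq_mono ha hb (m + 2)).1
    have h1' := (qseq_mono ha hb (m + 3)).1
    have hc : 2 ≤ (if (m + 2) % 2 = 0 then a else b) := by split <;> assumption
    have hstep := qseq_step a b (m + 2)
    rw [show m + 2 + 2 = m + 1 + 3 from by omega,
      show m + 2 + 1 = m + 3 from by omega] at hstep
    have e : m + 1 + 2 = m + 3 := by omega
    rw [e, hstep]
    nlinarith [ih, h1, h1', hc]

include ha hb hab in
lemma pseq_strict' : ∀ m : ℕ, 2 ≤ m → pseq a b m < pseq a b (m + 1) := by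
  intro m hm
  obtain ⟨n, rfl⟩ : ∃ n, m = n + 2 := ⟨m - 2, by omega⟩
  have := pseq_strict ha hb hab n
  rwa [show n + 2 + 1 = n + 3 from by omega]

include ha hb hab in
lemma qseq_strict' : ∀ m : ℕ, 2 ≤ m → qseq a b m < qseq a b (m + 1) := by
  intro m hm
  obtain ⟨n, rfl⟩ : ∃ n, m = n + 2 := ⟨m - 2, by omega⟩
  have := qseq_strict ha hb hab n
  rwa [show n + 2 + 1 = n + 3 from by omega]

include ha hb hab in
lemma pseq_odd_strictMono : StrictMono (fun k : ℕ => pseq a b (2 * k + 1)) := by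
  apply strictMono_nat_of_lt_succ
  intro n
  have h1 := (pseq_mono ha hb (2 * n + 1)).2
  have h2 := pseq_strict' ha hb hab (2 * n + 2) (by omega)
  show pseq a b (2 * n + 1) < pseq a b (2 * (n + 1) + 1)
  rw [show 2 * (n + 1) + 1 = 2 * n + 2 + 1 from by omega]
  calc pseq a b (2 * n + 1) ≤ pseq a b (2 * n + 1 + 1) := h1
    _ = pseq a b (2 * n + 2) := by rw [show 2 * n + 1 + 1 = 2 * n + 2 from by omega]
    _ < pseq a b (2 * n + 2 + 1) := h2

include ha hb hab in
lemma qseq_odd_strictMono : StrictMono (fun k : ℕ => qseq a b (2 * k + 1)) := by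
  apply strictMono_nat_of_lt_succ
  intro n
  have h1 := (qseq_mono ha hb (2 * n + 1)).2
  have h2 := qseq_strict' ha hb hab (2 * n + 2) (by omega)
  show qseq a b (2 * n + 1) < qseq a b (2 * (n + 1) + 1)
  rw [show 2 * (n + 1) + 1 = 2 * n + 2 + 1 from by omega]
  calc qseq a b (2 * n + 1) ≤ qseq a b (2 * n + 1 + 1) := h1
    _ = qseq a b (2 * n + 2) := by rw [show 2 * n + 1 + 1 = 2 * n + 2 from by omega]
    _ < qseq a b (2 * n + 2 + 1) := h2

end Seq

/-! ### Closed forms -/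

lemma xl_closed (a b : ℤ) : ∀ k : ℕ,
    xl a b (2 * k) = (pseq a b (2 * k + 1), -pseq a b (2 * k)) ∧
    xl a b (2 * k + 1) = (-pseq a b (2 * k + 1), pseq a b (2 * k + 2)) := by
  intro k
  induction k with
  | zero =>
    constructor
    · norm_num [pseq_zero, pseq_one]
      rfl
    · norm_num [pseq_one, pseq_two]
      rw [show (1 : ℕ) = 0 + 1 from rfl, xl, if_pos (by omega : (0 : ℕ) % 2 = 0)]
      simp [xl, r1, Prod.ext_iff]
      ring
  | succ k ih =>
    obtain ⟨_, ih2⟩ := ih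
    have hp3 : pseq a b (2 * k + 3) = a * pseq a b (2 * k + 2) - pseq a b (2 * k + 1) := by
      have h := pseq_step a b (2 * k + 1)
      rw [if_neg (by omega : ¬ (2 * k + 1) % 2 = 0)] at h
      rwa [show 2 * k + 1 + 2 = 2 * k + 3 from by omega,
        show 2 * k + 1 + 1 = 2 * k + 2 from by omega] at h
    have hp4 : pseq a b (2 * k + 4) = b * pseq a b (2 * k + 3) - pseq a b (2 * k + 2) := by
      have h := pseq_step a b (2 * k + 2)
      rw [if_pos (by omega : (2 * k + 2) % 2 = 0)] at h
      rwa [show 2 * k + 2 + 2 = 2 * k + 4 from by omega,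
        show 2 * k + 2 + 1 = 2 * k + 3 from by omega] at h
    have h1 : xl a b (2 * (k + 1)) = r2 a (xl a b (2 * k + 1)) := by
      rw [show 2 * (k + 1) = (2 * k + 1) + 1 from by omega, xl,
        if_neg (by omega : ¬ (2 * k + 1) % 2 = 0)]
    have hfst : xl a b (2 * (k + 1)) = (pseq a b (2 * (k + 1) + 1), -pseq a b (2 * (k + 1))) := by
      rw [h1, ih2, show 2 * (k + 1) + 1 = 2 * k + 3 from by omega,
        show 2 * (k + 1) = 2 * k + 2 from by omega, hp3]
      simp [r2, Prod.ext_iff]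
      ring
    refine ⟨hfst, ?_⟩
    have h2 : xl a b (2 * (k + 1) + 1) = r1 b (xl a b (2 * (k + 1))) := by
      rw [xl, if_pos (by omega : (2 * (k + 1)) % 2 = 0)]
    rw [h2, hfst, show 2 * (k + 1) + 2 = 2 * k + 4 from by omega,
      show 2 * (k + 1) + 1 = 2 * k + 3 from by omega,
      show 2 * (k + 1) = 2 * k + 2 from by omega, hp4]
    simp [r1, Prod.ext_iff]
    ring

lemma yl_closed (a b : ℤ) : ∀ k : ℕ,
    yl a b (2 * k) = (qseq a b (2 * k), -qseq a b (2 * k + 1)) ∧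
    yl a b (2 * k + 1) = (-qseq a b (2 * k + 2), qseq a b (2 * k + 1)) := by
  intro k
  induction k with
  | zero =>
    constructor
    · norm_num [qseq_zero, qseq_one]
      rfl
    · norm_num [qseq_one, qseq_two]
      rw [show (1 : ℕ) = 0 + 1 from rfl, yl, if_pos (by omega : (0 : ℕ) % 2 = 0)]
      simp [yl, r2, Prod.ext_iff]
      ring
  | succ k ih =>
    obtain ⟨_, ih2⟩ := ih
    have hq3 : qseq a b (2 * k + 3) = b * qseq a b (2 * k + 2) - qseq a b (2 * k + 1) := by
      have h := qseq_step a b (2 * k + 1)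
      rw [if_neg (by omega : ¬ (2 * k + 1) % 2 = 0)] at h
      rwa [show 2 * k + 1 + 2 = 2 * k + 3 from by omega,
        show 2 * k + 1 + 1 = 2 * k + 2 from by omega] at h
    have hq4 : qseq a b (2 * k + 4) = a * qseq a b (2 * k + 3) - qseq a b (2 * k + 2) := by
      have h := qseq_step a b (2 * k + 2)
      rw [if_pos (by omega : (2 * k + 2) % 2 = 0)] at h
      rwa [show 2 * k + 2 + 2 = 2 * k + 4 from by omega,
        show 2 * k + 2 + 1 = 2 * k + 3 from by omega] at h
    have h1 : yl a b (2 * (k + 1)) = r1 b (yl a b (2 * k + 1)) := by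
      rw [show 2 * (k + 1) = (2 * k + 1) + 1 from by omega, yl,
        if_neg (by omega : ¬ (2 * k + 1) % 2 = 0)]
    have hfst : yl a b (2 * (k + 1)) = (qseq a b (2 * (k + 1)), -qseq a b (2 * (k + 1) + 1)) := by
      rw [h1, ih2, show 2 * (k + 1) + 1 = 2 * k + 3 from by omega,
        show 2 * (k + 1) = 2 * k + 2 from by omega, hq3]
      simp [r1, Prod.ext_iff]
      ring
    refine ⟨hfst, ?_⟩
    have h2 : yl a b (2 * (k + 1) + 1) = r2 a (yl a b (2 * (k + 1))) := by
      rw [yl, if_pos (by omega : (2 * (k + 1)) % 2 = 0)]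
    rw [h2, hfst, show 2 * (k + 1) + 2 = 2 * k + 4 from by omega,
      show 2 * (k + 1) + 1 = 2 * k + 3 from by omega,
      show 2 * (k + 1) = 2 * k + 2 from by omega, hq4]
    simp [r2, Prod.ext_iff]
    ring

theorem stmt11 (a b : ℤ) (ha : 2 ≤ a) (hb : 2 ≤ b) (hab : 4 < a * b) :
    ({μ : ℤ × ℤ | ∃ f ∈ Submonoid.closure ({r1 b, r2 a} : Set (Function.End (ℤ × ℤ))),
        μ = f (1, -1)} = {μ : ℤ × ℤ | ∃ m : ℕ, μ = xl a b m ∨ μ = yl a b m}) ∧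
    Function.Injective (xl a b) ∧ Function.Injective (yl a b) ∧
    (∀ m k : ℕ, xl a b m = yl a b k → m = 0 ∧ k = 0) := by
  have hp1 : ∀ m, 1 ≤ pseq a b m := fun m => (pseq_mono ha hb m).1
  have hq1 : ∀ m, 1 ≤ qseq a b m := fun m => (qseq_mono ha hb m).1
  have hpmono : ∀ m, pseq a b m ≤ pseq a b (m + 1) := fun m => (pseq_mono ha hb m).2
  have hqmono : ∀ m, qseq a b m ≤ qseq a b (m + 1) := fun m => (qseq_mono ha hb m).2
  have hpodd := pseq_odd_strictMono ha hb hab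
  have hqodd := qseq_odd_strictMono ha hb hab
  have hps := pseq_strict' ha hb hab
  have hqs := qseq_strict' ha hb hab
  have hxc := xl_closed a b
  have hyc := yl_closed a b
  -- the set S
  set S : Set (ℤ × ℤ) := {μ : ℤ × ℤ | ∃ m : ℕ, μ = xl a b m ∨ μ = yl a b m} with hS
  -- S is closed under r1
  have hr1S : ∀ μ ∈ S, r1 b μ ∈ S := by
    rintro μ ⟨m, h | h⟩ <;> subst h
    · by_cases hm : m % 2 = 0
      · exact ⟨m + 1, Or.inl (by rw [xl]; simp [hm])⟩
      · obtain ⟨n, rfl⟩ : ∃ n, m = n + 1 := ⟨m - 1, by omega⟩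
        have hn : n % 2 = 0 := by omega
        refine ⟨n, Or.inl ?_⟩
        rw [show xl a b (n + 1) = r1 b (xl a b n) by rw [xl]; simp [hn], r1_r1]
    · by_cases hm : m % 2 = 0
      · rcases Nat.eq_zero_or_pos m with rfl | hpos
        · exact ⟨1, Or.inl (by norm_num [xl, yl, r1])⟩
        · obtain ⟨n, rfl⟩ : ∃ n, m = n + 1 := ⟨m - 1, by omega⟩
          have hn : ¬ n % 2 = 0 := by omega
          refine ⟨n, Or.inr ?_⟩
          rw [show yl a b (n + 1) = r1 b (yl a b n) by rw [yl]; simp [hn], r1_r1]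
      · exact ⟨m + 1, Or.inr (by rw [yl]; simp [hm])⟩
  -- S is closed under r2
  have hr2S : ∀ μ ∈ S, r2 a μ ∈ S := by
    rintro μ ⟨m, h | h⟩ <;> subst h
    · by_cases hm : m % 2 = 0
      · rcases Nat.eq_zero_or_pos m with rfl | hpos
        · exact ⟨1, Or.inr (by norm_num [xl, yl, r2])⟩
        · obtain ⟨n, rfl⟩ : ∃ n, m = n + 1 := ⟨m - 1, by omega⟩
          have hn : ¬ n % 2 = 0 := by omega
          refine ⟨n, Or.inl ?_⟩
          rw [show xl a b (n + 1) = r2 a (xl a b n) by rw [xl]; simp [hn], r2_r2]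
      · exact ⟨m + 1, Or.inl (by rw [xl]; simp [hm])⟩
    · by_cases hm : m % 2 = 0
      · exact ⟨m + 1, Or.inr (by rw [yl]; simp [hm])⟩
      · obtain ⟨n, rfl⟩ : ∃ n, m = n + 1 := ⟨m - 1, by omega⟩
        have hn : n % 2 = 0 := by omega
        refine ⟨n, Or.inr ?_⟩
        rw [show yl a b (n + 1) = r2 a (yl a b n) by rw [yl]; simp [hn], r2_r2]
  -- forward: every element of the orbit is in S
  have hforward : ∀ f ∈ Submonoid.closure ({r1 b, r2 a} : Set (Function.End (ℤ × ℤ))),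
      ∀ μ ∈ S, f μ ∈ S := by
    intro f hf
    induction hf using Submonoid.closure_induction with
    | mem x hx =>
      rcases hx with rfl | rfl
      · exact hr1S
      · exact hr2S
    | one => intro μ hμ; exact hμ
    | mul f g hf hg ihf ihg => intro μ hμ; exact ihf _ (ihg _ hμ)
  -- backward: each xl m / yl m is in the orbit
  have hback : ∀ m : ℕ,
      (∃ f ∈ Submonoid.closure ({r1 b, r2 a} : Set (Function.End (ℤ × ℤ))), xl a b m = f (1, -1)) ∧
      (∃ f ∈ Submonoid.closure ({r1 b, r2 a} : Set (Function.End (ℤ × ℤ))), yl a b m = f (1, -1)) := by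
    intro m
    have hr1mem : (r1 b : Function.End (ℤ × ℤ)) ∈
        Submonoid.closure ({r1 b, r2 a} : Set (Function.End (ℤ × ℤ))) :=
      Submonoid.subset_closure (Set.mem_insert _ _)
    have hr2mem : (r2 a : Function.End (ℤ × ℤ)) ∈
        Submonoid.closure ({r1 b, r2 a} : Set (Function.End (ℤ × ℤ))) :=
      Submonoid.subset_closure (Set.mem_insert_of_mem _ rfl)
    induction m with
    | zero => exact ⟨⟨1, Submonoid.one_mem _, rfl⟩, ⟨1, Submonoid.one_mem _, rfl⟩⟩
    | succ m ih =>
      obtain ⟨⟨f, hf, hfx⟩, ⟨g, hg, hgy⟩⟩ := ih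
      constructor
      · by_cases hm : m % 2 = 0
        · refine ⟨_, Submonoid.mul_mem _ hr1mem hf, ?_⟩
          rw [xl]; simp only [hm, if_true, hfx]; rfl
        · refine ⟨_, Submonoid.mul_mem _ hr2mem hf, ?_⟩
          rw [xl]; simp only [hm, if_false, hfx]; rfl
      · by_cases hm : m % 2 = 0
        · refine ⟨_, Submonoid.mul_mem _ hr2mem hg, ?_⟩
          rw [yl]; simp only [hm, if_true, hgy]; rfl
        · refine ⟨_, Submonoid.mul_mem _ hr1mem hg, ?_⟩
          rw [yl]; simp only [hm, if_false, hgy]; rfl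
  refine ⟨?_, ?_, ?_, ?_⟩
  · -- set equality
    ext μ
    constructor
    · rintro ⟨f, hf, rfl⟩
      exact hforward f hf _ ⟨0, Or.inl rfl⟩
    · rintro ⟨m, h | h⟩
      · obtain ⟨f, hf, hfx⟩ := (hback m).1
        exact ⟨f, hf, h.trans hfx⟩
      · obtain ⟨g, hg, hgy⟩ := (hback m).2
        exact ⟨g, hg, h.trans hgy⟩
  · -- xl injective
    intro m k h
    obtain ⟨i, hi | hi⟩ := Nat.even_or_odd' m <;>
      obtain ⟨j, hj | hj⟩ := Nat.even_or_odd' k <;> subst hi <;> subst hj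
    · rw [(hxc i).1, (hxc j).1, Prod.ext_iff] at h
      have := hpodd.injective (h.1 : pseq a b (2 * i + 1) = pseq a b (2 * j + 1))
      omega
    · rw [(hxc i).1, (hxc j).2, Prod.ext_iff] at h
      have := hp1 (2 * i + 1); have := hp1 (2 * j + 1)
      simp only at h; linarith [h.1]
    · rw [(hxc i).2, (hxc j).1, Prod.ext_iff] at h
      have := hp1 (2 * i + 1); have := hp1 (2 * j + 1)
      simp only at h; linarith [h.1]
    · rw [(hxc i).2, (hxc j).2, Prod.ext_iff] at h
      have h1 : pseq a b (2 * i + 1) = pseq a b (2 * j + 1) := by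
        have := h.1; simp only at this; linarith
      have := hpodd.injective h1
      omega
  · -- yl injective
    intro m k h
    obtain ⟨i, hi | hi⟩ := Nat.even_or_odd' m <;>
      obtain ⟨j, hj | hj⟩ := Nat.even_or_odd' k <;> subst hi <;> subst hj
    · rw [(hyc i).1, (hyc j).1, Prod.ext_iff] at h
      have h1 : qseq a b (2 * i + 1) = qseq a b (2 * j + 1) := by
        have := h.2; simp only at this; linarith
      have := hqodd.injective h1
      omega
    · rw [(hyc i).1, (hyc j).2, Prod.ext_iff] at h
      have := hq1 (2 * i + 1); have := hq1 (2 * j + 1)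
      simp only at h; linarith [h.2]
    · rw [(hyc i).2, (hyc j).1, Prod.ext_iff] at h
      have := hq1 (2 * i + 1); have := hq1 (2 * j + 1)
      simp only at h; linarith [h.2]
    · rw [(hyc i).2, (hyc j).2, Prod.ext_iff] at h
      have := hqodd.injective (h.2 : qseq a b (2 * i + 1) = qseq a b (2 * j + 1))
      omega
  · -- cross distinctness
    intro m k h
    obtain ⟨i, hi | hi⟩ := Nat.even_or_odd' m <;>
      obtain ⟨j, hj | hj⟩ := Nat.even_or_odd' k <;> subst hi <;> subst hj
    · -- even / even
      rw [(hxc i).1, (hyc j).1, Prod.ext_iff] at h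
      obtain ⟨h1, h2⟩ := h
      simp only at h1 h2
      -- h1 : p_{2i+1} = q_{2j}, h2 : -p_{2i} = -q_{2j+1}
      have hpe : pseq a b (2 * i) = pseq a b (2 * i + 1) := by
        have := hpmono (2 * i); have := hqmono (2 * j); omega
      have hqe : qseq a b (2 * j) = qseq a b (2 * j + 1) := by
        have := hpmono (2 * i); have := hqmono (2 * j); omega
      have hi0 : i = 0 := by
        by_contra hne
        have : 2 ≤ 2 * i := by omega
        exact absurd hpe (ne_of_lt (hps (2 * i) this))
      have hj0 : j = 0 := by
        by_contra hne
        have : 2 ≤ 2 * j := by omega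
        exact absurd hqe (ne_of_lt (hqs (2 * j) this))
      omega
    · -- even x / odd y : impossible
      rw [(hxc i).1, (hyc j).2, Prod.ext_iff] at h
      have := hp1 (2 * i + 1); have := hq1 (2 * j + 2)
      simp only at h; linarith [h.1]
    · -- odd x / even y : impossible
      rw [(hxc i).2, (hyc j).1, Prod.ext_iff] at h
      have := hp1 (2 * i + 1); have := hq1 (2 * j)
      simp only at h; linarith [h.1]
    · -- odd / odd
      rw [(hxc i).2, (hyc j).2, Prod.ext_iff] at h
      obtain ⟨h1, h2⟩ := h
      simp only at h1 h2
      -- h1 : -p_{2i+1} = -q_{2j+2}, h2 : p_{2i+2} = q_{2j+1}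
      have hpm := hpmono (2 * i + 1)
      rw [show 2 * i + 1 + 1 = 2 * i + 2 from by omega] at hpm
      have hqm := hqmono (2 * j + 1)
      rw [show 2 * j + 1 + 1 = 2 * j + 2 from by omega] at hqm
      have hpe : pseq a b (2 * i + 1) = pseq a b (2 * i + 2) := by omega
      have hqe : qseq a b (2 * j + 1) = qseq a b (2 * j + 2) := by omega
      have hi0 : i = 0 := by
        by_contra hne
        have h2i : 2 ≤ 2 * i + 1 := by omega
        have := hps (2 * i + 1) h2i
        rw [show 2 * i + 1 + 1 = 2 * i + 2 by ring] at this
        exact absurd hpe (ne_of_lt this)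
      have hj0 : j = 0 := by
        by_contra hne
        have h2j : 2 ≤ 2 * j + 1 := by omega
        have := hqs (2 * j + 1) h2j
        rw [show 2 * j + 1 + 1 = 2 * j + 2 by ring] at this
        exact absurd hqe (ne_of_lt this)
      subst hi0; subst hj0
      -- now p_1 = q_2 and p_2 = q_1, i.e. 1 = a - 1 and b - 1 = 1
      exfalso
      have hp2 := pseq_two a b
      have hq2 := qseq_two a b
      simp only [Nat.mul_zero, Nat.zero_add] at h1 h2
      rw [pseq_one, hq2] at h1
      rw [hp2, qseq_one] at h2
      nlinarith
end

section
/- Writing x_m λ = (u_m, v_m) ∈ Z^2, the signs alternate: for m even, u_m > 0 and v_m < 0; for m odd, u_m < 0 and v_m > 0. Similarly for y_m λ = (u'_m, v'_m): for m even, u'_m > 0 and v'_m < 0; for m odd, u'_m < 0 and v'_m > 0. -/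
lemma aux15 (a b : ℤ) (ha : 2 ≤ a) (hb : 2 ≤ b) : ∀ m : ℕ,
    (m % 2 = 0 → (1 ≤ (xl a b m).1 ∧ (xl a b m).2 ≤ -1 ∧ 0 ≤ (xl a b m).1 + (xl a b m).2) ∧
      (1 ≤ (yl a b m).1 ∧ (yl a b m).2 ≤ -1 ∧ (yl a b m).1 + (yl a b m).2 ≤ 0)) ∧
    (m % 2 = 1 → ((xl a b m).1 ≤ -1 ∧ 1 ≤ (xl a b m).2 ∧ 0 ≤ (xl a b m).1 + (xl a b m).2) ∧
      ((yl a b m).1 ≤ -1 ∧ 1 ≤ (yl a b m).2 ∧ (yl a b m).1 + (yl a b m).2 ≤ 0)) := by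
  intro m
  induction m with
  | zero => simp [xl, yl]
  | succ m ih =>
    rcases Nat.even_or_odd m with he | ho
    · have h0 : m % 2 = 0 := Nat.even_iff.mp he
      have h1 : (m + 1) % 2 = 1 := by omega
      obtain ⟨⟨hx1, hx2, hx3⟩, hy1, hy2, hy3⟩ := ih.1 h0
      refine ⟨by omega, fun _ => ?_⟩
      simp only [xl, yl, h0, if_pos, if_true, r1, r2]
      refine ⟨⟨by linarith, ?_, ?_⟩, ?_, by linarith, ?_⟩
      · nlinarith [mul_nonneg (show (0:ℤ) ≤ b - 1 by linarith)
          (show (0:ℤ) ≤ (xl a b m).1 - 1 by linarith)]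
      · nlinarith [mul_nonneg (show (0:ℤ) ≤ b - 2 by linarith)
          (show (0:ℤ) ≤ (xl a b m).1 - 1 by linarith)]
      · nlinarith [mul_nonneg (show (0:ℤ) ≤ a - 1 by linarith)
          (show (0:ℤ) ≤ -(yl a b m).2 - 1 by linarith)]
      · nlinarith [mul_nonneg (show (0:ℤ) ≤ a - 2 by linarith)
          (show (0:ℤ) ≤ -(yl a b m).2 - 1 by linarith)]
    · have h0 : m % 2 = 1 := Nat.odd_iff.mp ho
      have h1 : (m + 1) % 2 = 0 := by omega
      obtain ⟨⟨hx1, hx2, hx3⟩, hy1, hy2, hy3⟩ := ih.2 h0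
      refine ⟨fun _ => ?_, by omega⟩
      simp only [xl, yl, h0, r1, r2]
      norm_num
      refine ⟨⟨?_, by linarith, ?_⟩, by linarith, ?_, ?_⟩
      · nlinarith [mul_nonneg (show (0:ℤ) ≤ a - 1 by linarith)
          (show (0:ℤ) ≤ (xl a b m).2 - 1 by linarith)]
      · nlinarith [mul_nonneg (show (0:ℤ) ≤ a - 2 by linarith)
          (show (0:ℤ) ≤ (xl a b m).2 - 1 by linarith)]
      · nlinarith [mul_nonneg (show (0:ℤ) ≤ b - 1 by linarith)
          (show (0:ℤ) ≤ -(yl a b m).1 - 1 by linarith)]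
      · nlinarith [mul_nonneg (show (0:ℤ) ≤ b - 2 by linarith)
          (show (0:ℤ) ≤ -(yl a b m).1 - 1 by linarith)]

theorem stmt15 (a b : ℤ) (ha : 2 ≤ a) (hb : 2 ≤ b) (hab : 4 < a * b) :
    ∀ m : ℕ,
      (Even m → 0 < (xl a b m).1 ∧ (xl a b m).2 < 0 ∧
        0 < (yl a b m).1 ∧ (yl a b m).2 < 0) ∧
      (Odd m → (xl a b m).1 < 0 ∧ 0 < (xl a b m).2 ∧
        (yl a b m).1 < 0 ∧ 0 < (yl a b m).2) := by
  intro m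
  have h := aux15 a b ha hb m
  constructor
  · intro he
    obtain ⟨⟨p1, p2, _⟩, q1, q2, _⟩ := h.1 (Nat.even_iff.mp he)
    exact ⟨by linarith, by linarith, by linarith, by linarith⟩
  · intro ho
    obtain ⟨⟨p1, p2, _⟩, q1, q2, _⟩ := h.2 (Nat.odd_iff.mp ho)
    exact ⟨by linarith, by linarith, by linarith, by linarith⟩
end

section
/- The map m ↦ x_m λ is injective on Z_{≥0}, and the map m ↦ y_m λ is injective on Z_{≥0}; moreover x_m λ = y_k λ implies m = k = 0. -/
lemma xl_zero (a b : ℤ) : xl a b 0 = (1, -1) := rfl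

lemma xl_one (a b : ℤ) : xl a b 1 = (-1, b - 1) := by
  show (if 0 % 2 = 0 then r1 b (xl a b 0) else r2 a (xl a b 0)) = _
  simp [r1, xl_zero]
  ring

lemma xl_succ_even (a b : ℤ) (m : ℕ) (hm : m % 2 = 0) :
    xl a b (m + 1) = r1 b (xl a b m) := by
  show (if m % 2 = 0 then r1 b (xl a b m) else r2 a (xl a b m)) = _
  simp [hm]

lemma xl_succ_odd (a b : ℤ) (m : ℕ) (hm : m % 2 = 1) :
    xl a b (m + 1) = r2 a (xl a b m) := by
  show (if m % 2 = 0 then r1 b (xl a b m) else r2 a (xl a b m)) = _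
  simp [hm]

lemma abkey (a b : ℤ) (ha : 2 ≤ a) (hb : 2 ≤ b) (hab : 4 < a * b) :
    1 ≤ a * b - a - b := by
  have hb2 : b = 2 ∨ 3 ≤ b := by omega
  rcases hb2 with rfl | hb3
  · have : 3 ≤ a := by nlinarith
    nlinarith
  · nlinarith [mul_nonneg (by linarith : (0:ℤ) ≤ a - 2) (by linarith : (0:ℤ) ≤ b - 1)]

/-- The basic invariant for the `xl` orbit. -/
lemma xl_key (a b : ℤ) (ha : 2 ≤ a) (hb : 2 ≤ b) (hab : 4 < a * b) : ∀ m : ℕ,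
    (m % 2 = 0 → 1 ≤ (xl a b m).1 ∧ (xl a b m).2 ≤ -1 ∧
      0 ≤ (xl a b m).1 + (xl a b m).2 ∧ (m ≠ 0 → 1 ≤ (xl a b m).1 + (xl a b m).2)) ∧
    (m % 2 = 1 → (xl a b m).1 ≤ -1 ∧ 1 ≤ (xl a b m).2 ∧
      0 ≤ (xl a b m).1 + (xl a b m).2 ∧ (m ≠ 1 → 1 ≤ (xl a b m).1 + (xl a b m).2)) := by
  have hk := abkey a b ha hb hab
  intro m
  induction m with
  | zero =>
    refine ⟨fun _ => ?_, fun h => by omega⟩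
    simp [xl_zero]
  | succ m ih =>
    rcases Nat.mod_two_eq_zero_or_one m with hm | hm
    · -- step is r1
      obtain ⟨h1, h2, h3, h4⟩ := ih.1 hm
      have hx := xl_succ_even a b m hm
      refine ⟨fun h => by omega, fun _ => ?_⟩
      rw [hx]
      simp only [r1]
      refine ⟨by linarith, by nlinarith, by nlinarith, fun hne => ?_⟩
      have hm0 : m ≠ 0 := by omega
      have := h4 hm0
      nlinarith
    · -- step is r2
      obtain ⟨h1, h2, h3, h4⟩ := ih.2 hm
      have hx := xl_succ_odd a b m hm
      refine ⟨fun _ => ?_, fun h => by omega⟩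
      rw [hx]
      simp only [r2]
      refine ⟨by nlinarith, by linarith, by nlinarith, fun _ => ?_⟩
      by_cases hm1 : m = 1
      · subst hm1
        rw [xl_one]
        simp only
        nlinarith
      · have := h4 hm1
        nlinarith

/-- Size of the weight `xl a b m`. -/
def hseq (a b : ℤ) (m : ℕ) : ℤ :=
  if m % 2 = 0 then (xl a b m).1 - (xl a b m).2 else (xl a b m).2 - (xl a b m).1

lemma hseq_lt (a b : ℤ) (ha : 2 ≤ a) (hb : 2 ≤ b) (hab : 4 < a * b) :
    ∀ m : ℕ, 1 ≤ m → hseq a b m < hseq a b (m + 1) := by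
  have hk := abkey a b ha hb hab
  intro m hm1
  rcases Nat.mod_two_eq_zero_or_one m with hm | hm
  · obtain ⟨h1, h2, h3, h4⟩ := (xl_key a b ha hb hab m).1 hm
    have hsum := h4 (by omega)
    have e1 : (m + 1) % 2 ≠ 0 := by omega
    rw [hseq, hseq, xl_succ_even a b m hm, if_pos hm, if_neg e1]
    simp only [r1]
    nlinarith
  · obtain ⟨h1, h2, h3, h4⟩ := (xl_key a b ha hb hab m).2 hm
    have e1 : m % 2 ≠ 0 := by omega
    have e2 : (m + 1) % 2 = 0 := by omega
    rw [hseq, hseq, xl_succ_odd a b m hm, if_neg e1, if_pos e2]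
    simp only [r2]
    by_cases hm1' : m = 1
    · subst hm1'
      rw [xl_one]
      simp only
      nlinarith
    · have := h4 hm1'
      nlinarith

lemma hseq_mono (a b : ℤ) (ha : 2 ≤ a) (hb : 2 ≤ b) (hab : 4 < a * b) :
    ∀ m k : ℕ, 1 ≤ m → m < k → hseq a b m < hseq a b k := by
  intro m k hm hmk
  induction k with
  | zero => omega
  | succ k ih =>
    rcases Nat.lt_or_ge m k with h | h
    · exact lt_trans (ih h) (hseq_lt a b ha hb hab k (by omega))
    · have : m = k := by omega
      subst this
      exact hseq_lt a b ha hb hab m hm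

lemma xl_inj (a b : ℤ) (ha : 2 ≤ a) (hb : 2 ≤ b) (hab : 4 < a * b) :
    Function.Injective (xl a b) := by
  have key := xl_key a b ha hb hab
  suffices H : ∀ m k : ℕ, m < k → xl a b m ≠ xl a b k by
    intro m k h
    rcases lt_trichotomy m k with h' | h' | h'
    · exact absurd h (H _ _ h')
    · exact h'
    · exact absurd h.symm (H _ _ h')
  intro m k hlt heq
  have hpar : m % 2 = k % 2 := by
    rcases Nat.mod_two_eq_zero_or_one m with hm | hm <;>
      rcases Nat.mod_two_eq_zero_or_one k with hk2 | hk2 <;> try omega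
    · have h1 := ((key m).1 hm).1
      have h2 := ((key k).2 hk2).1
      rw [heq] at h1; linarith
    · have h1 := ((key m).2 hm).1
      have h2 := ((key k).1 hk2).1
      rw [heq] at h1; linarith
  rcases Nat.eq_zero_or_pos m with rfl | hm1
  · have hk0 : k % 2 = 0 := by omega
    have hs := ((key k).1 hk0).2.2.2 (by omega)
    rw [← heq, xl_zero] at hs
    norm_num at hs
  · have := hseq_mono a b ha hb hab m k hm1 hlt
    rw [hseq, hseq, ← hpar, heq] at this
    exact lt_irrefl _ this

lemma yl_sigma (a b : ℤ) : ∀ m : ℕ, yl a b m = (-(xl b a m).2, -(xl b a m).1) := by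
  intro m
  induction m with
  | zero => simp [yl, xl]
  | succ m ih =>
    rcases Nat.mod_two_eq_zero_or_one m with hm | hm
    · have hx : xl b a (m + 1) = r1 a (xl b a m) := xl_succ_even b a m hm
      have hy : yl a b (m + 1) = r2 a (yl a b m) := by
        show (if m % 2 = 0 then r2 a (yl a b m) else r1 b (yl a b m)) = _
        simp [hm]
      rw [hy, hx, ih]
      refine Prod.ext ?_ ?_ <;> simp [r1, r2]
    · have hx : xl b a (m + 1) = r2 b (xl b a m) := xl_succ_odd b a m hm
      have hy : yl a b (m + 1) = r1 b (yl a b m) := by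
        show (if m % 2 = 0 then r2 a (yl a b m) else r1 b (yl a b m)) = _
        simp [hm]
      rw [hy, hx, ih]
      refine Prod.ext ?_ ?_ <;> simp [r1, r2]

theorem stmt18 (a b : ℤ) (ha : 2 ≤ a) (hb : 2 ≤ b) (hab : 4 < a * b) :
    Function.Injective (xl a b) ∧ Function.Injective (yl a b) ∧
    (∀ m k : ℕ, xl a b m = yl a b k → m = 0 ∧ k = 0) := by
  have hab' : 4 < b * a := by rwa [mul_comm]
  have keyx := xl_key a b ha hb hab
  have keyy := xl_key b a hb ha hab'
  refine ⟨xl_inj a b ha hb hab, ?_, ?_⟩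
  · intro m k h
    rw [yl_sigma, yl_sigma] at h
    apply xl_inj b a hb ha hab'
    have h1 := congrArg Prod.fst h
    have h2 := congrArg Prod.snd h
    simp only at h1 h2
    exact Prod.ext (by linarith) (by linarith)
  · intro m k heq
    rw [yl_sigma] at heq
    have h1 : (xl a b m).1 = -(xl b a k).2 := congrArg Prod.fst heq
    have h2 : (xl a b m).2 = -(xl b a k).1 := congrArg Prod.snd heq
    rcases Nat.mod_two_eq_zero_or_one m with hm | hm
    · obtain ⟨a1, a2, a3, a4⟩ := (keyx m).1 hm
      have hk0 : k % 2 = 0 := by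
        rcases Nat.mod_two_eq_zero_or_one k with hk | hk
        · exact hk
        · obtain ⟨b1, b2, b3, b4⟩ := (keyy k).2 hk
          linarith
      obtain ⟨b1, b2, b3, b4⟩ := (keyy k).1 hk0
      have hm0 : m = 0 := by
        by_contra hne
        have := a4 hne
        linarith
      have hk00 : k = 0 := by
        by_contra hne
        have := b4 hne
        linarith
      exact ⟨hm0, hk00⟩
    · obtain ⟨a1, a2, a3, a4⟩ := (keyx m).2 hm
      have hk1 : k % 2 = 1 := by
        rcases Nat.mod_two_eq_zero_or_one k with hk | hk
        · obtain ⟨b1, b2, b3, b4⟩ := (keyy k).1 hk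
          linarith
        · exact hk
      obtain ⟨b1, b2, b3, b4⟩ := (keyy k).2 hk1
      exfalso
      have hm1 : m = 1 := by
        by_contra hne
        have := a4 hne
        linarith
      have hk11 : k = 1 := by
        by_contra hne
        have := b4 hne
        linarith
      subst hm1; subst hk11
      rw [xl_one a b, xl_one b a] at h1
      rw [xl_one a b, xl_one b a] at h2
      simp only at h1 h2
      nlinarith
end
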